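/- arXiv:2205.07391 — 4 statements merged into one kernel-verified Lean document; each statement's English description precedes it below -/
import Mathlib

section
/- Suppose the system x' = (A(t) - γ μ'(t)/μ(t) I)x admits a nonuniform μ-dichotomy with invariant projections P(t). Then U_γ = Im P, V_γ = Ker P, and U_γ ⊕ V_γ = ℝ × ℝⁿ (i.e. for each s, U_γ(s) = Im P(s), V_γ(s) = Ker P(s), and these subspaces are complementary in ℝⁿ). -/
open Filter Topology

noncomputable section

/-- Bounded linear operators on ℝⁿ. -/
abbrev Op (n : ℕ) := EuclideanSpace ℝ (Fin n) →L[ℝ] EuclideanSpace ℝ (Fin n)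

/-- μ is a growth rate: strictly increasing, positive, μ(0)=1, μ→∞ at +∞, μ→0 at -∞. -/
def GrowthRate (μ : ℝ → ℝ) : Prop :=
  StrictMono μ ∧ (∀ t, 0 < μ t) ∧ μ 0 = 1 ∧
    Tendsto μ atTop atTop ∧ Tendsto μ atBot (nhds 0)

/-- The evolution operator Ψ admits a nonuniform μ-dichotomy with invariant projections P
and constants K, α, β, θ, ν. -/
def NuDWith {n : ℕ} (μ : ℝ → ℝ) (Ψ : ℝ → ℝ → Op n) (P : ℝ → Op n)
    (K α β θ ν : ℝ) : Prop :=
  (∀ t, P t ∘L P t = P t) ∧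
  (∀ t s, P t ∘L Ψ t s = Ψ t s ∘L P s) ∧
  1 ≤ K ∧ α < 0 ∧ 0 < β ∧ 0 ≤ θ ∧ 0 ≤ ν ∧ α + θ < 0 ∧ 0 < β - ν ∧
  (∀ t s, s ≤ t → ‖Ψ t s ∘L P s‖ ≤ K * (μ t / μ s) ^ α * μ s ^ (Real.sign s * θ)) ∧
  (∀ t s, t ≤ s → ‖Ψ t s ∘L (1 - P s)‖ ≤ K * (μ t / μ s) ^ β * μ s ^ (Real.sign s * ν))

/-- The evolution operator Ψ admits a nonuniform μ-dichotomy. -/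
def NuD {n : ℕ} (μ : ℝ → ℝ) (Ψ : ℝ → ℝ → Op n) : Prop :=
  ∃ P K α β θ ν, NuDWith μ Ψ P K α β θ ν

/-- The evolution operator Φ_γ(t,s) = (μ(t)/μ(s))^{-γ} Φ(t,s) of the shifted system. -/
def shiftEvo {n : ℕ} (μ : ℝ → ℝ) (γ : ℝ) (Φ : ℝ → ℝ → Op n) : ℝ → ℝ → Op n :=
  fun t s => (μ t / μ s) ^ (-γ) • Φ t s

/-- The nonuniform μ-resolvent set. -/
def resolventND {n : ℕ} (μ : ℝ → ℝ) (Φ : ℝ → ℝ → Op n) : Set ℝ :=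
  {γ | NuD μ (shiftEvo μ γ Φ)}

/-- The nonuniform μ-dichotomy spectrum. -/
def spectrumND {n : ℕ} (μ : ℝ → ℝ) (Φ : ℝ → ℝ → Op n) : Set ℝ :=
  (resolventND μ Φ)ᶜ

/-- Φ is the evolution operator of x' = A(t)x. -/
def IsEvolutionOp {n : ℕ} (A : ℝ → Op n) (Φ : ℝ → ℝ → Op n) : Prop :=
  (∀ s, Φ s s = 1) ∧ (∀ t τ s, Φ t τ ∘L Φ τ s = Φ t s) ∧
    (∀ s t, HasDerivAt (fun r => Φ r s) (A t ∘L Φ t s) t)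

/-- U_γ = {(s,ξ) : sup_{t ≥ 0} ‖Φ(t,s)ξ‖ μ(t)^{-γ} < ∞}. -/
def Uset {n : ℕ} (μ : ℝ → ℝ) (Φ : ℝ → ℝ → Op n) (γ : ℝ) : Set (ℝ × EuclideanSpace ℝ (Fin n)) :=
  {p | ∃ C, ∀ t, 0 ≤ t → ‖Φ t p.1 p.2‖ * μ t ^ (-γ) ≤ C}

/-- V_γ = {(s,ξ) : sup_{t ≤ 0} ‖Φ(t,s)ξ‖ μ(t)^{-γ} < ∞}. -/
def Vset {n : ℕ} (μ : ℝ → ℝ) (Φ : ℝ → ℝ → Op n) (γ : ℝ) : Set (ℝ × EuclideanSpace ℝ (Fin n)) :=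
  {p | ∃ C, ∀ t, t ≤ 0 → ‖Φ t p.1 p.2‖ * μ t ^ (-γ) ≤ C}

/-!
For the shifted evolution `Ψ = Φ_γ` one has `‖Φ(t,s)ξ‖ μ(t)^{-γ} = μ(s)^{-γ} ‖Ψ(t,s)ξ‖`, so by
continuity `(s, ξ) ∈ U_γ` (resp. `V_γ`) says that `Ψ(t,s)ξ` stays bounded as `t → +∞`
(resp. `t → -∞`). The dichotomy bounds these orbits for `ξ ∈ Im P(s)` (resp. `Ker P(s)`).
Conversely, writing `(1 - P(s))ξ = Ψ(s,t)(1 - P(t))Ψ(t,s)ξ` and `P(s)ξ = Ψ(s,t)P(t)Ψ(t,s)ξ`,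
the dichotomy bounds them by multiples of `μ(t)^{ν-β} → 0` as `t → +∞` and of
`μ(t)^{-(α+θ)} → 0` as `t → -∞` respectively.
-/

open Set

theorem Filter.isBoundedUnder_le_const_mul_iff {ι : Type*} {l : Filter ι} {g : ι → ℝ} {c : ℝ}
    (hc : 0 < c) :
    IsBoundedUnder (· ≤ ·) l (fun t => c * g t) ↔ IsBoundedUnder (· ≤ ·) l g := by
  constructor
  · rintro ⟨C, hC⟩
    exact ⟨C / c, (eventually_map.1 hC).mono fun t ht => (le_div_iff₀' hc).2 ht⟩
  · rintro ⟨C, hC⟩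
    exact ⟨c * C, (eventually_map.1 hC).mono fun t ht => mul_le_mul_of_nonneg_left ht hc.le⟩

theorem Continuous.bddAbove_image_Ici_iff {f : ℝ → ℝ} (hf : Continuous f) (a : ℝ) :
    BddAbove (f '' Ici a) ↔ IsBoundedUnder (· ≤ ·) atTop f := by
  refine ⟨fun h => h.isBoundedUnder (Ici_mem_atTop a), fun ⟨C, hC⟩ => ?_⟩
  obtain ⟨N, hN⟩ := eventually_atTop.1 hC
  refine BddAbove.mono (image_mono (Ici_subset_Icc_union_Ici (b := N))) ?_
  rw [image_union]
  exact (isCompact_Icc.bddAbove_image hf.continuousOn).union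
    ⟨C, forall_mem_image.2 fun t ht => hN t ht⟩

theorem Continuous.bddAbove_image_Iic_iff {f : ℝ → ℝ} (hf : Continuous f) (a : ℝ) :
    BddAbove (f '' Iic a) ↔ IsBoundedUnder (· ≤ ·) atBot f := by
  refine ⟨fun h => h.isBoundedUnder (Iic_mem_atBot a), fun ⟨C, hC⟩ => ?_⟩
  obtain ⟨N, hN⟩ := eventually_atBot.1 hC
  refine BddAbove.mono (image_mono (Iic_subset_Iic_union_Icc (a := N))) ?_
  rw [image_union]
  exact BddAbove.union ⟨C, forall_mem_image.2 fun t ht => hN t ht⟩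
    (isCompact_Icc.bddAbove_image hf.continuousOn)

theorem apply_eq_zero_of_isBoundedUnder {E : Type*} [NormedAddCommGroup E] [NormedSpace ℝ E]
    {Ψ : ℝ → ℝ → E →L[ℝ] E} {R : ℝ → E →L[ℝ] E} {s : ℝ} {l : Filter ℝ} [l.NeBot]
    {c : ℝ → ℝ} (hinv : ∀ t, Ψ s t ∘L Ψ t s = 1) (hR : ∀ t, R t ∘L Ψ t s = Ψ t s ∘L R s)
    (hbound : ∀ᶠ t in l, ‖Ψ s t ∘L R t‖ ≤ c t) (hc : Tendsto c l (𝓝 0)) {ξ : E}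
    (hξ : IsBoundedUnder (· ≤ ·) l fun t => ‖Ψ t s ξ‖) : R s ξ = 0 := by
  obtain ⟨C, hC⟩ := hξ
  have hback : ∀ t, R s ξ = (Ψ s t ∘L R t) (Ψ t s ξ) := fun t => by
    rw [ContinuousLinearMap.comp_apply, ← ContinuousLinearMap.comp_apply (R t), hR,
      ContinuousLinearMap.comp_apply, ← ContinuousLinearMap.comp_apply (Ψ s t), hinv,
      one_apply_eq_self]
  have hle : ∀ᶠ t in l, ‖R s ξ‖ ≤ c t * C := by
    filter_upwards [hbound, hC] with t hct hCt
    calc ‖R s ξ‖ ≤ ‖Ψ s t ∘L R t‖ * ‖Ψ t s ξ‖ := hback t ▸ ContinuousLinearMap.le_opNorm _ _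
      _ ≤ c t * C := mul_le_mul hct hCt (norm_nonneg _) ((norm_nonneg _).trans hct)
  have hlim : Tendsto (fun t => c t * C) l (𝓝 0) := by simpa using hc.mul_const C
  exact norm_le_zero_iff.1 (ge_of_tendsto hlim hle)

section ShiftedEvolution

variable {n : ℕ} {μ : ℝ → ℝ} {γ : ℝ} {Φ : ℝ → ℝ → Op n}

theorem shiftEvo_comp_shiftEvo (hμ : ∀ t, 0 < μ t) (hΦ : ∀ t τ s, Φ t τ ∘L Φ τ s = Φ t s)
    (t τ s : ℝ) : shiftEvo μ γ Φ t τ ∘L shiftEvo μ γ Φ τ s = shiftEvo μ γ Φ t s := by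
  simp only [shiftEvo, ContinuousLinearMap.smul_comp, ContinuousLinearMap.comp_smul, smul_smul,
    hΦ]
  rw [mul_comm, ← Real.mul_rpow (div_pos (hμ t) (hμ τ)).le (div_pos (hμ τ) (hμ s)).le,
    div_mul_div_cancel₀ (hμ τ).ne']

theorem shiftEvo_self (hμ : ∀ t, 0 < μ t) (hΦ : ∀ s, Φ s s = 1) (s : ℝ) :
    shiftEvo μ γ Φ s s = 1 := by
  simp [shiftEvo, hΦ, (hμ s).ne']

theorem norm_apply_mul_rpow_eq (hμ : ∀ t, 0 < μ t) (t s : ℝ) (ξ : EuclideanSpace ℝ (Fin n)) :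
    ‖Φ t s ξ‖ * μ t ^ (-γ) = μ s ^ (-γ) * ‖shiftEvo μ γ Φ t s ξ‖ := by
  have := (Real.rpow_pos_of_pos (hμ s) (-γ)).ne'
  rw [shiftEvo, smul_apply, norm_smul, Real.norm_of_nonneg
    (Real.rpow_nonneg (div_pos (hμ t) (hμ s)).le _), Real.div_rpow (hμ t).le (hμ s).le]
  field_simp

end ShiftedEvolution

theorem IsEvolutionOp.continuous_apply {n : ℕ} {A : ℝ → Op n} {Φ : ℝ → ℝ → Op n}
    (hΦ : IsEvolutionOp A Φ) (s : ℝ) (ξ : EuclideanSpace ℝ (Fin n)) :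
    Continuous fun t => Φ t s ξ :=
  (continuous_iff_continuousAt.2 fun t => (hΦ.2.2 s t).continuousAt).clm_apply continuous_const

section WeightedGrowth

variable {n : ℕ} {A : ℝ → Op n} {Φ : ℝ → ℝ → Op n} {μ : ℝ → ℝ} {γ : ℝ}

theorem mem_Uset_iff_isBoundedUnder (hΦ : IsEvolutionOp A Φ) (hμ : ∀ t, 0 < μ t)
    (hμc : Continuous μ) (s : ℝ) (ξ : EuclideanSpace ℝ (Fin n)) :
    (s, ξ) ∈ Uset μ Φ γ ↔ IsBoundedUnder (· ≤ ·) atTop fun t => ‖shiftEvo μ γ Φ t s ξ‖ := by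
  have hf : Continuous fun t => ‖Φ t s ξ‖ * μ t ^ (-γ) :=
    (hΦ.continuous_apply s ξ).norm.mul (hμc.rpow_const fun t => Or.inl (hμ t).ne')
  rw [← isBoundedUnder_le_const_mul_iff (Real.rpow_pos_of_pos (hμ s) (-γ))]
  simp_rw [← norm_apply_mul_rpow_eq hμ]
  rw [← hf.bddAbove_image_Ici_iff 0]
  simp only [bddAbove_def, forall_mem_image, mem_Ici]
  rfl

theorem mem_Vset_iff_isBoundedUnder (hΦ : IsEvolutionOp A Φ) (hμ : ∀ t, 0 < μ t)
    (hμc : Continuous μ) (s : ℝ) (ξ : EuclideanSpace ℝ (Fin n)) :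
    (s, ξ) ∈ Vset μ Φ γ ↔ IsBoundedUnder (· ≤ ·) atBot fun t => ‖shiftEvo μ γ Φ t s ξ‖ := by
  have hf : Continuous fun t => ‖Φ t s ξ‖ * μ t ^ (-γ) :=
    (hΦ.continuous_apply s ξ).norm.mul (hμc.rpow_const fun t => Or.inl (hμ t).ne')
  rw [← isBoundedUnder_le_const_mul_iff (Real.rpow_pos_of_pos (hμ s) (-γ))]
  simp_rw [← norm_apply_mul_rpow_eq hμ]
  rw [← hf.bddAbove_image_Iic_iff 0]
  simp only [bddAbove_def, forall_mem_image, mem_Iic]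
  rfl

end WeightedGrowth

namespace NuDWith

variable {n : ℕ} {μ : ℝ → ℝ} {Ψ : ℝ → ℝ → Op n} {P : ℝ → Op n} {K α β θ ν : ℝ}

theorem norm_apply_le_of_apply_eq_self (h : NuDWith μ Ψ P K α β θ ν) (hμ : GrowthRate μ)
    {t s : ℝ} (hst : s ≤ t) {ξ : EuclideanSpace ℝ (Fin n)} (hξ : P s ξ = ξ) :
    ‖Ψ t s ξ‖ ≤ K * μ s ^ (Real.sign s * θ) * ‖ξ‖ := by
  obtain ⟨-, -, hK, hα, -, -, -, -, -, hbound, -⟩ := h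
  have hdecay : (μ t / μ s) ^ α ≤ 1 := Real.rpow_le_one_of_one_le_of_nonpos
    ((one_le_div (hμ.2.1 s)).2 (hμ.1.monotone hst)) hα.le
  have hK0 : 0 ≤ K := zero_le_one.trans hK
  calc ‖Ψ t s ξ‖ = ‖(Ψ t s ∘L P s) ξ‖ := by rw [ContinuousLinearMap.comp_apply, hξ]
    _ ≤ K * (μ t / μ s) ^ α * μ s ^ (Real.sign s * θ) * ‖ξ‖ :=
      (ContinuousLinearMap.le_opNorm _ _).trans
        (mul_le_mul_of_nonneg_right (hbound t s hst) (norm_nonneg _))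
    _ ≤ K * 1 * μ s ^ (Real.sign s * θ) * ‖ξ‖ := by
        gcongr
        exact Real.rpow_nonneg (hμ.2.1 s).le _
    _ = K * μ s ^ (Real.sign s * θ) * ‖ξ‖ := by rw [mul_one]

theorem norm_apply_le_of_apply_eq_zero (h : NuDWith μ Ψ P K α β θ ν) (hμ : GrowthRate μ)
    {t s : ℝ} (hts : t ≤ s) {ξ : EuclideanSpace ℝ (Fin n)} (hξ : P s ξ = 0) :
    ‖Ψ t s ξ‖ ≤ K * μ s ^ (Real.sign s * ν) * ‖ξ‖ := by
  obtain ⟨-, -, hK, -, hβ, -, -, -, -, -, hbound⟩ := h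
  have hdecay : (μ t / μ s) ^ β ≤ 1 := Real.rpow_le_one (div_pos (hμ.2.1 t) (hμ.2.1 s)).le
    ((div_le_one (hμ.2.1 s)).2 (hμ.1.monotone hts)) hβ.le
  have hK0 : 0 ≤ K := zero_le_one.trans hK
  calc ‖Ψ t s ξ‖ = ‖(Ψ t s ∘L (1 - P s)) ξ‖ := by
        rw [ContinuousLinearMap.comp_apply, sub_apply, hξ, sub_zero, one_apply_eq_self]
    _ ≤ K * (μ t / μ s) ^ β * μ s ^ (Real.sign s * ν) * ‖ξ‖ :=
      (ContinuousLinearMap.le_opNorm _ _).trans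
        (mul_le_mul_of_nonneg_right (hbound t s hts) (norm_nonneg _))
    _ ≤ K * 1 * μ s ^ (Real.sign s * ν) * ‖ξ‖ := by
        gcongr
        exact Real.rpow_nonneg (hμ.2.1 s).le _
    _ = K * μ s ^ (Real.sign s * ν) * ‖ξ‖ := by rw [mul_one]

theorem isBoundedUnder_atTop_iff (h : NuDWith μ Ψ P K α β θ ν) (hμ : GrowthRate μ) {s : ℝ}
    (hinv : ∀ t, Ψ s t ∘L Ψ t s = 1) (ξ : EuclideanSpace ℝ (Fin n)) :
    IsBoundedUnder (· ≤ ·) atTop (fun t => ‖Ψ t s ξ‖) ↔ P s ξ = ξ := by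
  refine ⟨fun hbdd => ?_, fun hξ => isBoundedUnder_of_eventually_le <|
    (eventually_ge_atTop s).mono fun t hst => h.norm_apply_le_of_apply_eq_self hμ hst hξ⟩
  obtain ⟨-, hcomm, -, -, -, -, -, -, hβν, -, hbound⟩ := h
  obtain ⟨-, hpos, -, htop, -⟩ := hμ
  have hR : ∀ t, (1 - P t) ∘L Ψ t s = Ψ t s ∘L (1 - P s) := fun t => by
    rw [ContinuousLinearMap.sub_comp, ContinuousLinearMap.comp_sub, hcomm]
    rfl
  have hbound' : ∀ᶠ t in atTop, ‖Ψ s t ∘L (1 - P t)‖ ≤ K * μ s ^ β * μ t ^ (-(β - ν)) := by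
    filter_upwards [eventually_gt_atTop (max s 0)] with t ht
    calc _ ≤ K * (μ s / μ t) ^ β * μ t ^ (Real.sign t * ν) :=
          hbound s t ((le_max_left s 0).trans ht.le)
      _ = K * μ s ^ β * μ t ^ (-(β - ν)) := by
          rw [Real.sign_of_pos ((le_max_right s 0).trans_lt ht), one_mul, neg_sub,
            Real.rpow_sub (hpos t), Real.div_rpow (hpos s).le (hpos t).le]
          ring
  have hc : Tendsto (fun t => K * μ s ^ β * μ t ^ (-(β - ν))) atTop (𝓝 0) := by
    simpa using ((tendsto_rpow_neg_atTop hβν).comp htop).const_mul (K * μ s ^ β)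
  have hQξ := apply_eq_zero_of_isBoundedUnder hinv hR hbound' hc hbdd
  rwa [sub_apply, one_apply_eq_self, sub_eq_zero, eq_comm] at hQξ

theorem isBoundedUnder_atBot_iff (h : NuDWith μ Ψ P K α β θ ν) (hμ : GrowthRate μ) {s : ℝ}
    (hinv : ∀ t, Ψ s t ∘L Ψ t s = 1) (ξ : EuclideanSpace ℝ (Fin n)) :
    IsBoundedUnder (· ≤ ·) atBot (fun t => ‖Ψ t s ξ‖) ↔ P s ξ = 0 := by
  refine ⟨fun hbdd => ?_, fun hξ => isBoundedUnder_of_eventually_le <|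
    (eventually_le_atBot s).mono fun t hts => h.norm_apply_le_of_apply_eq_zero hμ hts hξ⟩
  obtain ⟨-, hcomm, -, -, -, -, -, hαθ, -, hbound, -⟩ := h
  obtain ⟨-, hpos, -, -, hbot⟩ := hμ
  have hbound' : ∀ᶠ t in atBot, ‖Ψ s t ∘L P t‖ ≤ K * μ s ^ α * μ t ^ (-(α + θ)) := by
    filter_upwards [eventually_lt_atBot (min s 0)] with t ht
    calc _ ≤ K * (μ s / μ t) ^ α * μ t ^ (Real.sign t * θ) :=
          hbound s t (ht.le.trans (min_le_left s 0))
      _ = K * μ s ^ α * μ t ^ (-(α + θ)) := by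
          rw [Real.sign_of_neg (ht.trans_le (min_le_right s 0)),
            show -(α + θ) = -1 * θ - α by ring, Real.rpow_sub (hpos t),
            Real.div_rpow (hpos s).le (hpos t).le]
          ring
  have hc : Tendsto (fun t => K * μ s ^ α * μ t ^ (-(α + θ))) atBot (𝓝 0) := by
    have hexp : 0 < -(α + θ) := by linarith
    simpa using (((Real.continuous_rpow_const hexp.le).tendsto' 0 0
      (Real.zero_rpow hexp.ne')).comp hbot).const_mul (K * μ s ^ α)
  exact apply_eq_zero_of_isBoundedUnder hinv (hcomm · s) hbound' hc hbdd

end NuDWith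

theorem stmt6_general (n : ℕ) (A : ℝ → Op n)
    (Φ : ℝ → ℝ → Op n) (hΦ : IsEvolutionOp A Φ)
    (μ : ℝ → ℝ) (hgr : GrowthRate μ) (hdiff : Differentiable ℝ μ)
    (γ : ℝ) (P : ℝ → Op n) (K α β θ ν : ℝ)
    (hdich : NuDWith μ (shiftEvo μ γ Φ) P K α β θ ν) :
    ∀ s : ℝ,
      (∀ ξ, (s, ξ) ∈ Uset μ Φ γ ↔ ξ ∈ Set.range (P s)) ∧
      (∀ ξ, (s, ξ) ∈ Vset μ Φ γ ↔ P s ξ = 0) ∧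
      (∀ ξ : EuclideanSpace ℝ (Fin n), ∃ u v, u ∈ Set.range (P s) ∧ P s v = 0 ∧ ξ = u + v) := by
  intro s
  have hinv : ∀ t, shiftEvo μ γ Φ s t ∘L shiftEvo μ γ Φ t s = 1 := fun t => by
    rw [shiftEvo_comp_shiftEvo hgr.2.1 hΦ.2.1, shiftEvo_self hgr.2.1 hΦ.1]
  have hidem : ∀ x, P s (P s x) = P s x := ContinuousLinearMap.ext_iff.1 (hdich.1 s)
  have hrange : ∀ ξ, ξ ∈ Set.range (P s) ↔ P s ξ = ξ :=
    fun ξ => ⟨fun ⟨x, hx⟩ => hx ▸ hidem x, fun hξ => ⟨ξ, hξ⟩⟩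
  refine ⟨fun ξ => ?_, fun ξ => ?_, fun ξ => ⟨P s ξ, ξ - P s ξ, ⟨ξ, rfl⟩, ?_, by abel⟩⟩
  · rw [mem_Uset_iff_isBoundedUnder hΦ hgr.2.1 hdiff.continuous,
      hdich.isBoundedUnder_atTop_iff hgr hinv, hrange]
  · rw [mem_Vset_iff_isBoundedUnder hΦ hgr.2.1 hdiff.continuous,
      hdich.isBoundedUnder_atBot_iff hgr hinv]
  · rw [map_sub, hidem, sub_self]

/-- If the γ-shifted system admits a nonuniform μ-dichotomy with
projections P(t), then U_γ = Im P, V_γ = Ker P, and U_γ ⊕ V_γ = ℝ × ℝⁿ. -/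
theorem stmt6 (n : ℕ) (A : ℝ → Op n) (hA : Continuous A)
    (Φ : ℝ → ℝ → Op n) (hΦ : IsEvolutionOp A Φ)
    (μ : ℝ → ℝ) (hgr : GrowthRate μ) (hdiff : Differentiable ℝ μ)
    (γ : ℝ) (P : ℝ → Op n) (K α β θ ν : ℝ)
    (hdich : NuDWith μ (shiftEvo μ γ Φ) P K α β θ ν) :
    ∀ s : ℝ,
      (∀ ξ, (s, ξ) ∈ Uset μ Φ γ ↔ ξ ∈ Set.range (P s)) ∧
      (∀ ξ, (s, ξ) ∈ Vset μ Φ γ ↔ P s ξ = 0) ∧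
      (∀ ξ : EuclideanSpace ℝ (Fin n), ∃ u v, u ∈ Set.range (P s) ∧ P s v = 0 ∧ ξ = u + v) :=
  stmt6_general n A Φ hΦ μ hgr hdiff γ P K α β θ ν hdich
end
end

section
/- The nonuniform μ-resolvent set ρ^{ND}_μ(A) = {γ ∈ ℝ : x' = (A(t) − γ μ'(t)/μ(t) I)x admits a nonuniform μ-dichotomy} is an open subset of ℝ. Specifically, if γ ∈ ρ^{ND}_μ(A) with dichotomy constants α < 0, β > 0, θ, ν ≥ 0 (α+θ < 0, β−ν > 0), then for every η with |η − γ| < min{(β−ν)/2, −(α+θ)/2}, η ∈ ρ^{ND}_μ(A), with the same invariant projection. -/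
open Filter Topology

noncomputable section

lemma shiftEvo_eq_rpow_smul {n : ℕ} {μ : ℝ → ℝ} (hpos : ∀ t, 0 < μ t) (Φ : ℝ → ℝ → Op n)
    (γ η t s : ℝ) :
    shiftEvo μ η Φ t s = (μ t / μ s) ^ (γ - η) • shiftEvo μ γ Φ t s := by
  rw [shiftEvo, shiftEvo, smul_smul, ← Real.rpow_add (div_pos (hpos t) (hpos s))]
  ring_nf

lemma norm_rpow_smul_le {E : Type*} [SeminormedAddCommGroup E] [NormedSpace ℝ E]
    {x K a c d : ℝ} {v : E} (hx : 0 < x) (hv : ‖v‖ ≤ K * x ^ a * c) :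
    ‖x ^ d • v‖ ≤ K * x ^ (a + d) * c :=
  calc ‖x ^ d • v‖ = x ^ d * ‖v‖ := by
        rw [norm_smul, Real.norm_of_nonneg (Real.rpow_nonneg hx.le d)]
    _ ≤ x ^ d * (K * x ^ a * c) := by gcongr
    _ = K * x ^ (a + d) * c := by rw [Real.rpow_add hx]; ring

lemma NuDWith.shiftEvo {n : ℕ} {μ : ℝ → ℝ} (hpos : ∀ t, 0 < μ t) {Φ : ℝ → ℝ → Op n}
    {γ η K α β θ ν : ℝ} {P : ℝ → Op n} (h : NuDWith μ (shiftEvo μ γ Φ) P K α β θ ν)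
    (hlow : α + θ < η - γ) (hup : η - γ < β - ν) :
    NuDWith μ (shiftEvo μ η Φ) P K (α + (γ - η)) (β + (γ - η)) θ ν := by
  obtain ⟨hproj, hcomm, hK, -, -, hθ, hν, -, -, hstable, hunstable⟩ := h
  have hratio (t s : ℝ) : 0 < μ t / μ s := div_pos (hpos t) (hpos s)
  refine ⟨hproj, fun t s => ?_, hK, by linarith, by linarith, hθ, hν, by linarith, by linarith,
    fun t s hst => ?_, fun t s hts => ?_⟩
  · rw [shiftEvo_eq_rpow_smul hpos Φ γ, ContinuousLinearMap.comp_smul,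
      ContinuousLinearMap.smul_comp, hcomm]
  · rw [shiftEvo_eq_rpow_smul hpos Φ γ, ContinuousLinearMap.smul_comp]
    exact norm_rpow_smul_le (hratio t s) (hstable t s hst)
  · rw [shiftEvo_eq_rpow_smul hpos Φ γ, ContinuousLinearMap.smul_comp]
    exact norm_rpow_smul_le (hratio t s) (hunstable t s hts)

lemma isOpen_resolventND {n : ℕ} {μ : ℝ → ℝ} (hpos : ∀ t, 0 < μ t) (Φ : ℝ → ℝ → Op n) :
    IsOpen (resolventND μ Φ) := by
  rw [Metric.isOpen_iff]
  rintro γ ⟨P, K, α, β, θ, ν, h⟩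
  have hαθ : α + θ < 0 := h.2.2.2.2.2.2.2.1
  have hβν : 0 < β - ν := h.2.2.2.2.2.2.2.2.1
  refine ⟨min (-(α + θ)) (β - ν), lt_min (by linarith) hβν, fun η hη => ?_⟩
  simp only [Metric.mem_ball, Real.dist_eq, lt_min_iff, abs_lt] at hη
  exact ⟨P, K, _, _, θ, ν, h.shiftEvo hpos (by linarith) (by linarith)⟩

theorem stmt7_general (n : ℕ) (Φ : ℝ → ℝ → Op n) (μ : ℝ → ℝ) (hgr : GrowthRate μ) :
    IsOpen (resolventND μ Φ) ∧
    ∀ γ P K α β θ ν, NuDWith μ (shiftEvo μ γ Φ) P K α β θ ν →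
      ∀ η : ℝ, |η - γ| < min ((β - ν) / 2) (-(α + θ) / 2) →
        (∃ K' α' β' θ' ν', NuDWith μ (shiftEvo μ η Φ) P K' α' β' θ' ν') ∧
        η ∈ resolventND μ Φ := by
  refine ⟨isOpen_resolventND hgr.2.1 Φ, fun γ P K α β θ ν h η hη => ?_⟩
  have hαθ : α + θ < 0 := h.2.2.2.2.2.2.2.1
  have hβν : 0 < β - ν := h.2.2.2.2.2.2.2.2.1
  simp only [lt_min_iff, abs_lt] at hη
  have hshift := h.shiftEvo hgr.2.1 (η := η) (by linarith) (by linarith)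
  exact ⟨⟨_, _, _, _, _, hshift⟩, ⟨P, _, _, _, _, _, hshift⟩⟩

/-- the nonuniform μ-resolvent set is open; moreover every η with
|η - γ| < min{(β-ν)/2, -(α+θ)/2} is in the resolvent set, with the same projection. -/
theorem stmt7 (n : ℕ) (A : ℝ → Op n) (hA : Continuous A)
    (Φ : ℝ → ℝ → Op n) (hΦ : IsEvolutionOp A Φ)
    (μ : ℝ → ℝ) (hgr : GrowthRate μ) (hdiff : Differentiable ℝ μ) :
    IsOpen (resolventND μ Φ) ∧
    ∀ γ P K α β θ ν, NuDWith μ (shiftEvo μ γ Φ) P K α β θ ν →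
      ∀ η : ℝ, |η - γ| < min ((β - ν) / 2) (-(α + θ) / 2) →
        (∃ K' α' β' θ' ν', NuDWith μ (shiftEvo μ η Φ) P K' α' β' θ' ν') ∧
        η ∈ resolventND μ Φ :=
  stmt7_general n Φ μ hgr
end
end

section
/- If γ₁ < γ₂, both shifted systems x' = (A(t) − γᵢ μ'(t)/μ(t) I)x admit nonuniform μ-dichotomies with the same invariant projection P(t) (with constants Kᵢ, αᵢ < 0, βᵢ > 0, θᵢ, νᵢ ≥ 0, αᵢ+θᵢ < 0, βᵢ−νᵢ > 0), then for every γ ∈ [γ₁, γ₂] the shifted system x' = (A(t) − γ μ'(t)/μ(t) I)x admits a nonuniform μ-dichotomy with projection P and constants K = max{K₁,K₂}, α₁, β₂, θ₁, ν₂. In particular [γ₁, γ₂] ⊆ ρ^{ND}_μ(A). -/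
open Filter Topology

noncomputable section

/-!
Since `Φ_γ(t,s) = (μ(t)/μ(s))^{γ'-γ} Φ_{γ'}(t,s)` and the factor `μ(t)/μ(s)` is `≥ 1` for
`t ≥ s` and `≤ 1` for `t ≤ s`, increasing the shift only shrinks the stable part forward in time
and decreasing it only shrinks the unstable part backward in time. So for `γ ∈ [γ₁, γ₂]` the
stable bound is inherited from `γ₁` and the unstable bound from `γ₂`.
-/

namespace ShiftEvo

variable {n : ℕ} {μ : ℝ → ℝ} {Φ : ℝ → ℝ → Op n}

lemma eq_rpow_smul (hμ : ∀ t, 0 < μ t) (γ γ' t s : ℝ) :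
    shiftEvo μ γ Φ t s = (μ t / μ s) ^ (γ' - γ) • shiftEvo μ γ' Φ t s := by
  rw [shiftEvo, shiftEvo, smul_smul, ← Real.rpow_add (div_pos (hμ t) (hμ s))]
  ring_nf

lemma comp_comm_of_comp_comm (hμ : ∀ t, 0 < μ t) {P : ℝ → Op n} {γ' : ℝ}
    (h : ∀ t s, P t ∘L shiftEvo μ γ' Φ t s = shiftEvo μ γ' Φ t s ∘L P s) (γ t s : ℝ) :
    P t ∘L shiftEvo μ γ Φ t s = shiftEvo μ γ Φ t s ∘L P s := by
  rw [eq_rpow_smul hμ γ γ', ContinuousLinearMap.comp_smul, ContinuousLinearMap.smul_comp, h]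

lemma norm_smul_le_of_le_one {E : Type*} [SeminormedAddCommGroup E] [NormedSpace ℝ E]
    {c : ℝ} (hc₀ : 0 ≤ c) (hc₁ : c ≤ 1) (x : E) : ‖c • x‖ ≤ ‖x‖ := by
  rw [norm_smul, Real.norm_of_nonneg hc₀]
  exact mul_le_of_le_one_left (norm_nonneg x) hc₁

lemma norm_comp_le_of_le_forward (hμ_mono : Monotone μ) (hμ : ∀ t, 0 < μ t)
    {γ γ' t s : ℝ} (hγ : γ' ≤ γ) (hst : s ≤ t) (L : Op n) :
    ‖shiftEvo μ γ Φ t s ∘L L‖ ≤ ‖shiftEvo μ γ' Φ t s ∘L L‖ := by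
  have hratio : 1 ≤ μ t / μ s := (one_le_div (hμ s)).2 (hμ_mono hst)
  rw [eq_rpow_smul hμ γ γ', ContinuousLinearMap.smul_comp]
  exact norm_smul_le_of_le_one (E := Op n) (Real.rpow_nonneg (by positivity) _)
    (Real.rpow_le_one_of_one_le_of_nonpos hratio (by linarith : γ' - γ ≤ 0)) _

lemma norm_comp_le_of_le_backward (hμ_mono : Monotone μ) (hμ : ∀ t, 0 < μ t)
    {γ γ' t s : ℝ} (hγ : γ ≤ γ') (hts : t ≤ s) (L : Op n) :
    ‖shiftEvo μ γ Φ t s ∘L L‖ ≤ ‖shiftEvo μ γ' Φ t s ∘L L‖ := by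
  have hratio₀ : 0 ≤ μ t / μ s := (div_pos (hμ t) (hμ s)).le
  have hratio : μ t / μ s ≤ 1 := (div_le_one (hμ s)).2 (hμ_mono hts)
  rw [eq_rpow_smul hμ γ γ', ContinuousLinearMap.smul_comp]
  exact norm_smul_le_of_le_one (E := Op n) (Real.rpow_nonneg hratio₀ _)
    (Real.rpow_le_one hratio₀ hratio (by linarith : 0 ≤ γ' - γ)) _

end ShiftEvo

open ShiftEvo in
theorem nuDWith_shiftEvo_of_mem_Icc {n : ℕ} {μ : ℝ → ℝ} {Φ : ℝ → ℝ → Op n} {P : ℝ → Op n}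
    (hμ_mono : Monotone μ) (hμ : ∀ t, 0 < μ t) {γ₁ γ₂ γ : ℝ} (hγ : γ ∈ Set.Icc γ₁ γ₂)
    {K₁ α₁ β₁ θ₁ ν₁ K₂ α₂ β₂ θ₂ ν₂ : ℝ}
    (h₁ : NuDWith μ (shiftEvo μ γ₁ Φ) P K₁ α₁ β₁ θ₁ ν₁)
    (h₂ : NuDWith μ (shiftEvo μ γ₂ Φ) P K₂ α₂ β₂ θ₂ ν₂) :
    NuDWith μ (shiftEvo μ γ Φ) P (max K₁ K₂) α₁ β₂ θ₁ ν₂ := by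
  obtain ⟨hP, hcomm, hK₁, hα₁, -, hθ₁, -, hαθ₁, -, hstable, -⟩ := h₁
  obtain ⟨-, -, -, -, hβ₂, -, hν₂, -, hβν₂, -, hunstable⟩ := h₂
  refine ⟨hP, comp_comm_of_comp_comm hμ hcomm γ, hK₁.trans (le_max_left _ _), hα₁, hβ₂,
    hθ₁, hν₂, hαθ₁, hβν₂, fun t s hst => ?_, fun t s hts => ?_⟩
  · calc ‖shiftEvo μ γ Φ t s ∘L P s‖
        ≤ ‖shiftEvo μ γ₁ Φ t s ∘L P s‖ := norm_comp_le_of_le_forward hμ_mono hμ hγ.1 hst _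
      _ ≤ K₁ * (μ t / μ s) ^ α₁ * μ s ^ (Real.sign s * θ₁) := hstable t s hst
      _ ≤ max K₁ K₂ * (μ t / μ s) ^ α₁ * μ s ^ (Real.sign s * θ₁) := by
        have := hμ t; have := hμ s
        gcongr
        exact le_max_left _ _
  · calc ‖shiftEvo μ γ Φ t s ∘L (1 - P s)‖
        ≤ ‖shiftEvo μ γ₂ Φ t s ∘L (1 - P s)‖ :=
          norm_comp_le_of_le_backward hμ_mono hμ hγ.2 hts _
      _ ≤ K₂ * (μ t / μ s) ^ β₂ * μ s ^ (Real.sign s * ν₂) := hunstable t s hts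
      _ ≤ max K₁ K₂ * (μ t / μ s) ^ β₂ * μ s ^ (Real.sign s * ν₂) := by
        have := hμ t; have := hμ s
        gcongr
        exact le_max_right _ _

theorem stmt10_general (n : ℕ)
    (Φ : ℝ → ℝ → Op n)
    (μ : ℝ → ℝ) (hgr : GrowthRate μ)
    (γ₁ γ₂ : ℝ) (P : ℝ → Op n)
    (K₁ α₁ β₁ θ₁ ν₁ K₂ α₂ β₂ θ₂ ν₂ : ℝ)
    (h1 : NuDWith μ (shiftEvo μ γ₁ Φ) P K₁ α₁ β₁ θ₁ ν₁)
    (h2 : NuDWith μ (shiftEvo μ γ₂ Φ) P K₂ α₂ β₂ θ₂ ν₂) :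
    (∀ γ ∈ Set.Icc γ₁ γ₂, NuDWith μ (shiftEvo μ γ Φ) P (max K₁ K₂) α₁ β₂ θ₁ ν₂) ∧
    Set.Icc γ₁ γ₂ ⊆ resolventND μ Φ := by
  have hdich : ∀ γ ∈ Set.Icc γ₁ γ₂, NuDWith μ (shiftEvo μ γ Φ) P (max K₁ K₂) α₁ β₂ θ₁ ν₂ :=
    fun γ hγ => nuDWith_shiftEvo_of_mem_Icc hgr.1.monotone hgr.2.1 hγ h1 h2
  exact ⟨hdich, fun γ hγ => ⟨P, max K₁ K₂, α₁, β₂, θ₁, ν₂, hdich γ hγ⟩⟩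

/-- common projection at γ₁ < γ₂ gives a nonuniform μ-dichotomy with
constants max{K₁,K₂}, α₁, β₂, θ₁, ν₂ at every γ ∈ [γ₁,γ₂]; hence [γ₁,γ₂] ⊆ ρ^{ND}_μ(A). -/
theorem stmt10 (n : ℕ) (A : ℝ → Op n) (hA : Continuous A)
    (Φ : ℝ → ℝ → Op n) (hΦ : IsEvolutionOp A Φ)
    (μ : ℝ → ℝ) (hgr : GrowthRate μ) (hdiff : Differentiable ℝ μ)
    (γ₁ γ₂ : ℝ) (hlt : γ₁ < γ₂) (P : ℝ → Op n)
    (K₁ α₁ β₁ θ₁ ν₁ K₂ α₂ β₂ θ₂ ν₂ : ℝ)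
    (h1 : NuDWith μ (shiftEvo μ γ₁ Φ) P K₁ α₁ β₁ θ₁ ν₁)
    (h2 : NuDWith μ (shiftEvo μ γ₂ Φ) P K₂ α₂ β₂ θ₂ ν₂) :
    (∀ γ ∈ Set.Icc γ₁ γ₂, NuDWith μ (shiftEvo μ γ Φ) P (max K₁ K₂) α₁ β₂ θ₁ ν₂) ∧
    Set.Icc γ₁ γ₂ ⊆ resolventND μ Φ :=
  stmt10_general n Φ μ hgr γ₁ γ₂ P K₁ α₁ β₁ θ₁ ν₁ K₂ α₂ β₂ θ₂ ν₂ h1 h2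
end
end

section
/- Let P₀ ∈ Mₙ(ℝ) be a symmetric projection and X : ℝ → GLₙ(ℝ). For each t, the matrix Q(t) = P₀ X(t)ᵀX(t) P₀ + (I−P₀) X(t)ᵀX(t) (I−P₀) is symmetric positive definite, and there is a unique symmetric positive definite R(t) with R(t)² = Q(t) and P₀R(t) = R(t)P₀. Moreover S(t) = X(t)R(t)⁻¹ is invertible, S(t)P₀S(t)⁻¹ = X(t)P₀X(t)⁻¹, ‖S(t)‖ ≤ √2, and ‖S(t)⁻¹‖ ≤ √(‖X(t)P₀X(t)⁻¹‖² + ‖X(t)(I−P₀)X(t)⁻¹‖²). -/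
open Matrix

noncomputable section

/-- The operator norm of a real square matrix, induced by the Euclidean norm on ℝⁿ. -/
def opN {n : ℕ} (M : Matrix (Fin n) (Fin n) ℝ) : ℝ :=
  ‖(Matrix.toEuclideanCLM (𝕜 := ℝ) (n := Fin n) M :
      EuclideanSpace ℝ (Fin n) →L[ℝ] EuclideanSpace ℝ (Fin n))‖

/-!
`Q` is the pinching of `XᵀX` by `P₀`. With the reflection `U = 1 - 2P₀` one has
`2Q = XᵀX + U XᵀX U`, which makes `Q` positive definite and, for `S = XR⁻¹`, gives
`SᵀS + (XUR⁻¹)ᵀ(XUR⁻¹) = R⁻¹(2Q)R⁻¹ = 2`, hence `‖S‖ ≤ √2`.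
Since `P₀` commutes with `Q`, it commutes with the square root `R` given by the continuous
functional calculus, so `S` conjugates `P₀` like `X` does. Finally
`(S⁻¹)ᵀS⁻¹ = X⁻ᵀQX⁻¹ = AᵀA + BᵀB` with `A = XP₀X⁻¹`, `B = X(1-P₀)X⁻¹`, and the C⋆-identity
`‖T‖² = ‖T⋆T‖` bounds `‖S⁻¹‖`.
-/

open scoped ComplexOrder MatrixOrder

def pinch {A : Type*} [Ring A] (p a : A) : A := p * a * p + (1 - p) * a * (1 - p)

section Pinch

variable {A : Type*} [Ring A] {p : A}

theorem commute_pinch (hp : p * p = p) (a : A) : Commute p (pinch p a) := by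
  have h₁ : p * (1 - p) = 0 := by rw [mul_sub, mul_one, hp, sub_self]
  have h₂ : (1 - p) * p = 0 := by rw [sub_mul, one_mul, hp, sub_self]
  calc p * pinch p a = (p * p) * a * p + (p * (1 - p)) * a * (1 - p) := by
        rw [pinch]; noncomm_ring
    _ = p * a * (p * p) + (1 - p) * a * ((1 - p) * p) := by rw [hp, h₁, h₂]; noncomm_ring
    _ = pinch p a * p := by rw [pinch]; noncomm_ring

theorem two_mul_pinch (p a : A) : 2 * pinch p a = a + (1 - 2 * p) * a * (1 - 2 * p) := by
  rw [pinch]; noncomm_ring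

variable [StarRing A]

theorem IsSelfAdjoint.one_sub_two_mul (hp : IsSelfAdjoint p) : IsSelfAdjoint (1 - 2 * p) := by
  rw [IsSelfAdjoint, star_sub, star_one, star_mul, hp.star_eq, star_ofNat]
  noncomm_ring

theorem pinch_star_mul_self (hp : IsSelfAdjoint p) (x : A) :
    pinch p (star x * x) = star (x * p) * (x * p) + star (x * (1 - p)) * (x * (1 - p)) := by
  simp only [pinch, star_mul, star_sub, star_one, hp.star_eq]
  noncomm_ring

theorem star_mul_self_add_star_mul_self_eq_two_of_mul_self_eq_pinch {x r r' : A}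
    (hp : IsSelfAdjoint p) (hr' : IsSelfAdjoint r') (hr'r : r' * r = 1) (hrr' : r * r' = 1)
    (hr : r * r = pinch p (star x * x)) :
    star (x * r') * (x * r') + star (x * (1 - 2 * p) * r') * (x * (1 - 2 * p) * r') = 2 := by
  calc star (x * r') * (x * r') + star (x * (1 - 2 * p) * r') * (x * (1 - 2 * p) * r')
      = r' * (star x * x + (1 - 2 * p) * (star x * x) * (1 - 2 * p)) * r' := by
        simp only [star_mul, hr'.star_eq, hp.one_sub_two_mul.star_eq]; noncomm_ring
    _ = 2 * ((r' * r) * (r * r')) := by rw [← two_mul_pinch, ← hr]; noncomm_ring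
    _ = 2 := by rw [hr'r, hrr', mul_one, mul_one]

theorem star_mul_self_eq_add_of_mul_self_eq_pinch {x r : A} (hp : IsSelfAdjoint p)
    (hr : IsSelfAdjoint r) (hrr : r * r = pinch p (star x * x)) (y : A) :
    star (r * y) * (r * y) =
      star (x * p * y) * (x * p * y) + star (x * (1 - p) * y) * (x * (1 - p) * y) := by
  calc star (r * y) * (r * y) = star y * (r * r) * y := by
        rw [star_mul, hr.star_eq]; noncomm_ring
    _ = star y * (star (x * p) * (x * p) + star (x * (1 - p)) * (x * (1 - p))) * y := by
        rw [hrr, pinch_star_mul_self hp]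
    _ = _ := by simp only [star_mul]; noncomm_ring

end Pinch

theorem CFC.existsUnique_isStrictlyPositive_mul_self_eq_of_commute {A : Type*} [PartialOrder A]
    [Ring A] [StarRing A] [TopologicalSpace A] [StarOrderedRing A] [Algebra ℝ A]
    [ContinuousFunctionalCalculus ℝ A IsSelfAdjoint] [NonnegSpectrumClass ℝ A]
    [IsTopologicalRing A] [T2Space A] {p q : A} (hq : IsStrictlyPositive q)
    (hpq : Commute p q) :
    ∃! r : A, IsStrictlyPositive r ∧ r * r = q ∧ Commute p r := by
  refine ⟨CFC.sqrt q, ⟨hq.sqrt, CFC.sqrt_mul_sqrt_self q hq.nonneg, ?_⟩, ?_⟩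
  · rw [CFC.sqrt_eq_cfc]
    exact (hpq.symm.cfc_nnreal NNReal.sqrt).symm
  · rintro r ⟨hr, hrr, -⟩
    exact (CFC.sqrt_unique hrr hr.nonneg).symm

theorem CStarRing.norm_sq_le_of_star_mul_self_eq_add {A : Type*} [NonUnitalNormedRing A]
    [StarRing A] [CStarRing A] {t a b : A} (h : star t * t = star a * a + star b * b) :
    ‖t‖ ^ 2 ≤ ‖a‖ ^ 2 + ‖b‖ ^ 2 := by
  simp only [sq, ← CStarRing.norm_star_mul_self, h]
  exact norm_add_le _ _

theorem ContinuousLinearMap.norm_le_sqrt_of_star_mul_self_add_star_mul_self_eq {𝕜 E : Type*}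
    [RCLike 𝕜] [NormedAddCommGroup E] [InnerProductSpace 𝕜 E] [CompleteSpace E]
    {T G : E →L[𝕜] E} {c : ℝ} (hc : 0 ≤ c) (h : star T * T + star G * G = (c : 𝕜) • 1) :
    ‖T‖ ≤ √c := by
  refine opNorm_le_bound _ (Real.sqrt_nonneg c) fun v => ?_
  have hv : ‖T v‖ ^ 2 + ‖G v‖ ^ 2 = c * ‖v‖ ^ 2 := by
    rw [apply_norm_sq_eq_inner_adjoint_left, apply_norm_sq_eq_inner_adjoint_left,
      ← map_add, ← inner_add_left, ← star_eq_adjoint, ← star_eq_adjoint, ← mul_def, ← mul_def,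
      ← _root_.add_apply, h, _root_.smul_apply, one_apply_eq_self, inner_smul_left,
      inner_self_eq_norm_sq_to_K]
    simp
  rw [← Real.sqrt_sq (norm_nonneg v), ← Real.sqrt_mul hc]
  exact Real.le_sqrt_of_sq_le (by nlinarith [sq_nonneg ‖G v‖])

section OpN

variable {n : ℕ}

theorem opN_le_sqrt_of_star_mul_self_add_star_mul_self_eq {M N : Matrix (Fin n) (Fin n) ℝ}
    {c : ℝ} (hc : 0 ≤ c) (h : star M * M + star N * N = c • 1) : opN M ≤ √c :=
  ContinuousLinearMap.norm_le_sqrt_of_star_mul_self_add_star_mul_self_eq hc <| by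
    simpa [map_star] using congrArg (toEuclideanCLM (𝕜 := ℝ) (n := Fin n)) h

theorem opN_le_sqrt_of_star_mul_self_eq_add {M A B : Matrix (Fin n) (Fin n) ℝ}
    (h : star M * M = star A * A + star B * B) : opN M ≤ √(opN A ^ 2 + opN B ^ 2) :=
  Real.le_sqrt_of_sq_le <| CStarRing.norm_sq_le_of_star_mul_self_eq_add <| by
    simpa [map_star] using congrArg (toEuclideanCLM (𝕜 := ℝ) (n := Fin n)) h

end OpN

namespace Matrix

variable {ι : Type*} [Fintype ι] [DecidableEq ι]

theorem posDef_pinch_star_mul_self {𝕜 : Type*} [RCLike 𝕜] {P X : Matrix ι ι 𝕜}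
    (hP : IsSelfAdjoint P) (hX : IsUnit X) : (pinch P (star X * X)).PosDef := by
  have h₂ : (2 * pinch P (star X * X)).PosDef := by
    rw [two_mul_pinch]
    nth_rewrite 1 [← hP.one_sub_two_mul.star_eq]
    exact (PosDef.conjTranspose_mul_self X (mulVec_injective_iff_isUnit.mpr hX)).add_posSemidef
      ((posSemidef_conjTranspose_mul_self X).conjTranspose_mul_mul_same _)
  have := h₂.smul (a := (2⁻¹ : ℝ)) (by norm_num)
  rwa [two_mul, ← two_smul ℝ, smul_smul, inv_mul_cancel₀ two_ne_zero, one_smul] at this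

theorem mul_inv_mul_mul_inv_inv_of_commute {α : Type*} [CommRing α] {P R : Matrix ι ι α}
    (hR : IsUnit R) (hPR : Commute P R) (X : Matrix ι ι α) :
    X * R⁻¹ * P * (X * R⁻¹)⁻¹ = X * P * X⁻¹ := by
  have hR' : IsUnit R.det := (isUnit_iff_isUnit_det R).mp hR
  rw [mul_inv_rev, nonsing_inv_nonsing_inv R hR']
  calc X * R⁻¹ * P * (R * X⁻¹) = X * R⁻¹ * (P * R) * X⁻¹ := by noncomm_ring
    _ = X * (R⁻¹ * R) * P * X⁻¹ := by rw [hPR.eq]; noncomm_ring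
    _ = X * P * X⁻¹ := by rw [nonsing_inv_mul R hR', mul_one]

end Matrix

/-- for a symmetric projection P₀ and invertible X(t), the matrix
Q(t) = P₀X(t)ᵀX(t)P₀ + (I-P₀)X(t)ᵀX(t)(I-P₀) is symmetric positive definite, with a
unique symmetric positive definite square root R(t) commuting with P₀; and
S(t) = X(t)R(t)⁻¹ is invertible with S(t)P₀S(t)⁻¹ = X(t)P₀X(t)⁻¹, ‖S(t)‖ ≤ √2 and
‖S(t)⁻¹‖ ≤ √(‖X(t)P₀X(t)⁻¹‖² + ‖X(t)(I-P₀)X(t)⁻¹‖²). -/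
theorem stmt17 (n : ℕ) (P₀ : Matrix (Fin n) (Fin n) ℝ)
    (hproj : P₀ * P₀ = P₀) (hsym : P₀ᵀ = P₀)
    (X : ℝ → Matrix (Fin n) (Fin n) ℝ) (hX : ∀ t, IsUnit (X t)) (t : ℝ) :
    (P₀ * (X t)ᵀ * X t * P₀ + (1 - P₀) * (X t)ᵀ * X t * (1 - P₀)).PosDef ∧
    (∃! R : Matrix (Fin n) (Fin n) ℝ, R.PosDef ∧
        R * R = P₀ * (X t)ᵀ * X t * P₀ + (1 - P₀) * (X t)ᵀ * X t * (1 - P₀) ∧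
        P₀ * R = R * P₀) ∧
    (∀ R : Matrix (Fin n) (Fin n) ℝ, R.PosDef →
        R * R = P₀ * (X t)ᵀ * X t * P₀ + (1 - P₀) * (X t)ᵀ * X t * (1 - P₀) →
        P₀ * R = R * P₀ →
        IsUnit (X t * R⁻¹) ∧
        (X t * R⁻¹) * P₀ * (X t * R⁻¹)⁻¹ = X t * P₀ * (X t)⁻¹ ∧
        opN (X t * R⁻¹) ≤ Real.sqrt 2 ∧
        opN ((X t * R⁻¹)⁻¹) ≤
          Real.sqrt (opN (X t * P₀ * (X t)⁻¹) ^ 2 + opN (X t * (1 - P₀) * (X t)⁻¹) ^ 2)) := by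
  have hP : IsSelfAdjoint P₀ := hsym
  have hQ : P₀ * (X t)ᵀ * X t * P₀ + (1 - P₀) * (X t)ᵀ * X t * (1 - P₀) =
      pinch P₀ (star (X t) * X t) := by
    simp only [pinch, star_eq_conjTranspose, conjTranspose_eq_transpose_of_trivial, mul_assoc]
  rw [hQ]
  have hQpos := posDef_pinch_star_mul_self hP (hX t)
  refine ⟨hQpos, ?_, fun R hR hRR hPR => ?_⟩
  · simpa only [isStrictlyPositive_iff_posDef, commute_iff_eq] using
      CFC.existsUnique_isStrictlyPositive_mul_self_eq_of_commute hQpos.isStrictlyPositive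
        (commute_pinch hproj _)
  have hRdet : IsUnit R.det := (isUnit_iff_isUnit_det R).mp hR.isUnit
  refine ⟨(hX t).mul hR.inv.isUnit, mul_inv_mul_mul_inv_inv_of_commute hR.isUnit hPR (X t),
    opN_le_sqrt_of_star_mul_self_add_star_mul_self_eq (N := X t * (1 - 2 * P₀) * R⁻¹)
      zero_le_two ?_, opN_le_sqrt_of_star_mul_self_eq_add ?_⟩
  · rw [star_mul_self_add_star_mul_self_eq_two_of_mul_self_eq_pinch hP hR.inv.isHermitian
      (nonsing_inv_mul R hRdet) (mul_nonsing_inv R hRdet) hRR, two_smul, one_add_one_eq_two]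
  · rw [Matrix.mul_inv_rev, nonsing_inv_nonsing_inv R hRdet]
    exact star_mul_self_eq_add_of_mul_self_eq_pinch hP hR.isHermitian hRR _
end
end
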